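/- Let q, t be transcendental (generic) over ℚ and define for a partition λ: ε_λ = 1 + (t−1) Σ_{k=1}^{ℓ(λ)} (q^{λ_k} − 1) t^{−k}, and for an N-tuple λ⃗ with independent parameters u_1,…,u_N: e_{λ⃗} = Σ_{i=1}^N u_i ε_{λ^(i)}. Then e_{λ⃗} = e_{μ⃗} implies λ⃗ = μ⃗ (the eigenvalues are non-degenerate). -/

import Mathlib

structure Partition' where
  parts : ℕ →₀ ℕ
  antitone : ∀ ⦃i j : ℕ⦄, i ≤ j → parts j ≤ parts i

/-- Number of nonzero parts `ℓ(λ)`. -/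
def Partition'.length (l : Partition') : ℕ := l.parts.support.card

/-- `ε_λ = 1 + (t−1) Σ_{k=1}^{ℓ(λ)} (q^{λ_k} − 1) t^{−k}`. -/
noncomputable def eps {K : Type*} [Field K] (q t : K) (l : Partition') : K :=
  1 + (t - 1) * ∑ k ∈ Finset.range l.length, (q ^ (l.parts k) - 1) * (t ^ (k + 1))⁻¹

/-!
Fix `M` bounding all the lengths. Then `t^M (ε_λ - 1) = (t - 1) P_λ(q, t)` for the rational
polynomial `P_λ = Σ_{k<M} (Q^{λ_k} - 1) T^{M-k-1}`, whose coefficient of `Q^n T^{M-k-1}` detects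
whether `λ_k = n`. The `u_i` are algebraically, hence linearly, independent over `ℚ[q, t]`, so
`e_λ⃗ = e_μ⃗` forces `P_{λ^(i)}(q, t) = P_{μ^(i)}(q, t)` for each `i`; algebraic independence of
`q, t` turns this into `P_{λ^(i)} = P_{μ^(i)}`, whence `λ^(i) = μ^(i)`.
-/

open MvPolynomial Finset

theorem Finsupp.single_add_single_inj {α M : Type*} [AddMonoid M] {i j : α} (hij : i ≠ j)
    {a b c d : M} : single i a + single j b = single i c + single j d ↔ a = c ∧ b = d := by
  refine ⟨fun h ↦ ⟨?_, ?_⟩, fun ⟨hac, hbd⟩ ↦ hac ▸ hbd ▸ rfl⟩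
  · simpa [hij] using DFunLike.congr_fun h i
  · simpa [hij.symm] using DFunLike.congr_fun h j

theorem AlgebraicIndependent.linearIndependent_adjoin_of_sumElim {R A ι ι' : Type*}
    [CommRing R] [CommRing A] [Algebra R A] {x : ι → A} {y : ι' → A}
    (h : AlgebraicIndependent R (Sum.elim x y)) :
    LinearIndependent (Algebra.adjoin R (Set.range x)) y := by
  have hswap : AlgebraicIndependent R (Sum.elim y x) := by
    simpa using h.comp Sum.swap Sum.swap_leftInverse.injective
  exact (sumElim_iff.mp hswap).2.linearIndependent

namespace Partition'

theorem ext {l m : Partition'} (h : l.parts = m.parts) : l = m := by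
  cases l; cases m; simpa using h

theorem parts_eq_zero (l : Partition') {k : ℕ} (hk : l.length ≤ k) : l.parts k = 0 := by
  by_contra hne
  have hsub : range (k + 1) ⊆ l.parts.support := fun j hj ↦
    Finsupp.mem_support_iff.mpr fun hj0 ↦ hne <| by
      simpa [hj0] using l.antitone (Nat.lt_succ_iff.mp (mem_range.mp hj))
  simpa using (card_le_card hsub).trans hk

theorem eps_eq_sum_range {K : Type*} [Field K] (q t : K) (l : Partition') {M : ℕ}
    (hM : l.length ≤ M) :
    eps q t l = 1 + (t - 1) * ∑ k ∈ range M, (q ^ l.parts k - 1) * (t ^ (k + 1))⁻¹ := by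
  rw [eps, sum_subset (range_subset_range.mpr hM)]
  intro k _ hk
  simp [l.parts_eq_zero (not_lt.mp (mem_range.not.mp hk))]

variable {R : Type*} [CommRing R]

variable (R) in
noncomputable def epsPoly (l : Partition') (M : ℕ) : MvPolynomial (Fin 2) R :=
  ∑ k ∈ range M, (X 0 ^ l.parts k - 1) * X 1 ^ (M - (k + 1))

theorem sub_one_mul_aeval_epsPoly {K : Type*} [Field K] [Algebra R K] (q t : K) (ht : t ≠ 0)
    {l : Partition'} {M : ℕ} (hM : l.length ≤ M) :
    (t - 1) * aeval ![q, t] (l.epsPoly R M) = t ^ M * (eps q t l - 1) := by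
  rw [eps_eq_sum_range q t l hM, add_sub_cancel_left, epsPoly, map_sum, mul_sum, mul_sum, mul_sum]
  refine sum_congr rfl fun k hk ↦ ?_
  have hkM : k + 1 ≤ M := mem_range.mp hk
  simp only [map_mul, map_sub, map_pow, map_one, aeval_X, Matrix.cons_val_zero,
    Matrix.cons_val_one, pow_sub₀ t ht hkM]
  ring

theorem sub_one_mul_sum_aeval_epsPoly_sub {K ι : Type*} [Field K] [Algebra R K] (q t : K)
    (ht : t ≠ 0) (s : Finset ι) (u : ι → K) {lam mu : ι → Partition'} {M : ℕ}
    (hlam : ∀ i, (lam i).length ≤ M) (hmu : ∀ i, (mu i).length ≤ M) :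
    (t - 1) * ∑ i ∈ s, aeval ![q, t] ((lam i).epsPoly R M - (mu i).epsPoly R M) * u i =
      t ^ M * (∑ i ∈ s, u i * eps q t (lam i) - ∑ i ∈ s, u i * eps q t (mu i)) := by
  rw [mul_sum, ← sum_sub_distrib, mul_sum]
  refine sum_congr rfl fun i _ ↦ ?_
  rw [map_sub]
  linear_combination u i * sub_one_mul_aeval_epsPoly (R := R) q t ht (hlam i) -
    u i * sub_one_mul_aeval_epsPoly (R := R) q t ht (hmu i)

theorem coeff_epsPoly (l : Partition') {M k : ℕ} (hk : k < M) (n : ℕ) :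
    coeff (Finsupp.single 0 n + Finsupp.single 1 (M - (k + 1))) (l.epsPoly R M) =
      (if l.parts k = n then 1 else 0) - if 0 = n then 1 else 0 := by
  have hterm (a c : ℕ) : ((X 0 : MvPolynomial (Fin 2) R) ^ a - 1) * X 1 ^ c =
      monomial (Finsupp.single 0 a + Finsupp.single 1 c) 1 -
        monomial (Finsupp.single 0 0 + Finsupp.single 1 c) 1 := by
    simp [sub_mul, X_pow_eq_monomial, monomial_mul]
  rw [epsPoly, coeff_sum, sum_eq_single_of_mem k (mem_range.mpr hk)]
  · simp only [hterm, coeff_sub, coeff_monomial,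
      Finsupp.single_add_single_inj (zero_ne_one' (Fin 2)), and_true]
  · intro j hj hjk
    have hc : M - (j + 1) ≠ M - (k + 1) := by have := mem_range.mp hj; omega
    simp only [hterm, coeff_sub, coeff_monomial,
      Finsupp.single_add_single_inj (zero_ne_one' (Fin 2)), hc, and_false, if_false, sub_zero]

theorem eq_of_epsPoly_eq [Nontrivial R] {l m : Partition'} {M : ℕ} (hl : l.length ≤ M)
    (hm : m.length ≤ M) (h : l.epsPoly R M = m.epsPoly R M) : l = m := by
  refine ext (Finsupp.ext fun k ↦ ?_)
  rcases lt_or_ge k M with hk | hk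
  · have hcoeff :=
      congrArg (coeff (Finsupp.single 0 (l.parts k) + Finsupp.single 1 (M - (k + 1)))) h
    rw [coeff_epsPoly l hk, coeff_epsPoly m hk, sub_left_inj] at hcoeff
    by_contra hne
    simp [Ne.symm hne] at hcoeff
  · rw [l.parts_eq_zero (hl.trans hk), m.parts_eq_zero (hm.trans hk)]

end Partition'

/-- For `q, t, u_1, …, u_N` algebraically independent over `ℚ`, the eigenvalues
`e_{λ⃗} = Σ_i u_i ε_{λ^{(i)}}` are non-degenerate: `e_{λ⃗} = e_{μ⃗}` implies `λ⃗ = μ⃗`. -/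
theorem eigenvalues_nondegenerate {K : Type*} [Field K] [CharZero K] (N : ℕ)
    (q t : K) (u : Fin N → K)
    (h : AlgebraicIndependent ℚ (Sum.elim ![q, t] u))
    (lam mu : Fin N → Partition')
    (he : ∑ i, u i * eps q t (lam i) = ∑ i, u i * eps q t (mu i)) :
    lam = mu := by
  have hqt : AlgebraicIndependent ℚ ![q, t] := h.comp Sum.inl Sum.inl_injective
  have ht : Transcendental ℚ t := hqt.transcendental 1
  have ht0 : t ≠ 0 := fun h0 ↦ ht (h0 ▸ isAlgebraic_zero)
  have ht1 : t - 1 ≠ 0 := sub_ne_zero.mpr fun h1 ↦ ht (h1 ▸ isAlgebraic_one)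
  obtain ⟨M, hM⟩ := Finite.exists_le fun i ↦ max (lam i).length (mu i).length
  have hlam (i : Fin N) : (lam i).length ≤ M := (le_max_left _ _).trans (hM i)
  have hmu (i : Fin N) : (mu i).length ≤ M := (le_max_right _ _).trans (hM i)
  let c (i : Fin N) : Algebra.adjoin ℚ (Set.range ![q, t]) :=
    ⟨aeval ![q, t] ((lam i).epsPoly ℚ M - (mu i).epsPoly ℚ M), by
      rw [Algebra.adjoin_range_eq_range_aeval]; exact AlgHom.mem_range_self _ _⟩
  have hc : ∑ i, c i • u i = 0 := by
    refine (mul_eq_zero.mp ?_).resolve_left ht1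
    change (t - 1) * ∑ i, aeval ![q, t] ((lam i).epsPoly ℚ M - (mu i).epsPoly ℚ M) * u i = 0
    rw [Partition'.sub_one_mul_sum_aeval_epsPoly_sub q t ht0 univ u hlam hmu, he, sub_self,
      mul_zero]
  funext i
  have hci := Fintype.linearIndependent_iff.mp h.linearIndependent_adjoin_of_sumElim c hc i
  refine Partition'.eq_of_epsPoly_eq (R := ℚ) (hlam i) (hmu i) (sub_eq_zero.mp ?_)
  exact (injective_iff_map_eq_zero _).mp (algebraicIndependent_iff_injective_aeval.mp hqt) _
    (congrArg Subtype.val hci)
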